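/- Under the probability measure P̄ defined by dP̄/dP restricted to 𝒢_t equal to Λ_t, the random variables Y_1, Y_2, …, Y_t are independent standard Gaussian N(0,1) random variables; in particular, for every t ≥ 0 and every τ ∈ ℝ, P̄(Y_{t+1} ≤ τ | 𝒢_t) = ∫_{−∞}^{τ} φ(u) du almost surely. -/

import Mathlib

open MeasureTheory ProbabilityTheory Finset Matrix

noncomputable section

/-- Standard normal density `φ`. -/
def stdPDF (u : ℝ) : ℝ := (Real.sqrt (2 * Real.pi))⁻¹ * Real.exp (-u ^ 2 / 2)

/-- `𝒴_t`, the σ-field generated by the observations `Y_s`, `s ≤ t`. -/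
def sigY {Ω : Type*} (Y : ℤ → Ω → ℝ) (t : ℕ) : MeasurableSpace Ω :=
  ⨆ s : {s : ℤ // s ≤ (t : ℤ)}, MeasurableSpace.comap (Y s.1) inferInstance

/-- `ℱ_t`, the σ-field generated by the hidden states `X_0, …, X_t`. -/
def sigF {Ω : Type*} {N : ℕ} (X : ℕ → Ω → Fin N → ℝ) (t : ℕ) : MeasurableSpace Ω :=
  ⨆ s : Fin (t + 1), MeasurableSpace.comap (X s.1) inferInstance

/-- `𝒢_t`, the σ-field generated by `X_0, …, X_t` and the observations up to time `t`. -/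
def sigG {Ω : Type*} {N : ℕ} (X : ℕ → Ω → Fin N → ℝ) (Y : ℤ → Ω → ℝ) (t : ℕ) :
    MeasurableSpace Ω := sigF X t ⊔ sigY Y t

/-- The vector `(Y_t, Y_{t-1}, …, Y_{t-p+1})` of the `p` last observations. -/
def past {Ω : Type*} (Y : ℤ → Ω → ℝ) (p : ℕ) (t : ℤ) (ω : Ω) : Fin p → ℝ :=
  fun k => Y (t - (k : ℤ)) ω

/-- `Λ_t = ∏_{l=1}^t λ_l`, with `λ_{l+1} = ⟨σ, X_l⟩ φ(Y_{l+1}) / φ(ε_{l+1})` and `Λ_0 = 1`. -/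
def Lam {Ω : Type*} {N : ℕ} (X : ℕ → Ω → Fin N → ℝ) (Y : ℤ → Ω → ℝ) (ε : ℕ → Ω → ℝ)
    (σv : Fin N → ℝ) (t : ℕ) (ω : Ω) : ℝ :=
  ∏ l ∈ Finset.range t,
    (∑ i, σv i * X l ω i) * stdPDF (Y ((l : ℤ) + 1) ω) / stdPDF (ε (l + 1) ω)

/-- `Γ^i(Y_{t+1}) = φ((Y_{t+1} − F_{e_i}(Y_{t−p+1},…,Y_t))/σ_{e_i}) / (σ_{e_i} φ(Y_{t+1}))`. -/
def Gam {Ω : Type*} {N p : ℕ} (Y : ℤ → Ω → ℝ) (F : Fin N → (Fin p → ℝ) → ℝ)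
    (σv : Fin N → ℝ) (i : Fin N) (t : ℕ) (ω : Ω) : ℝ :=
  stdPDF ((Y ((t : ℤ) + 1) ω - F i (past Y p t ω)) / σv i) /
    (σv i * stdPDF (Y ((t : ℤ) + 1) ω))

/-!
Given `𝒢_t`, the observation `Y_{t+1} = a + b ε_{t+1}` has `𝒢_t`-measurable coefficients `a`, `b > 0`
and a standard Gaussian noise `ε_{t+1}` independent of `𝒢_t`; meanwhile `Λ_{t+1} = Λ_t λ_{t+1}` with
`λ_{t+1} = b φ(a + b ε_{t+1}) / φ(ε_{t+1})`, `Λ_t` being `𝒢_t`-measurable. By the affine change of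
variables `u = a + b e`, weighting `N(0,1)` by `b φ(a + b e) / φ(e)` makes `a + b e` standard Gaussian,
so `P̄(s ∩ {Y_{t+1} ∈ B}) = P̄(s) N(0,1)(B)` for `s ∈ 𝒢_t`. Thus `Y_{t+1} ~ N(0,1)` is independent of
`𝒢_t ⊇ σ(Y_1, …, Y_t)` under `P̄`, which gives mutual independence and the constant conditional law.
-/

open scoped ENNReal

lemma stdPDF_pos (u : ℝ) : 0 < stdPDF u := by
  unfold stdPDF
  positivity

@[fun_prop]
lemma measurable_stdPDF : Measurable stdPDF := by
  unfold stdPDF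
  fun_prop

lemma gaussianPDFReal_zero_one : gaussianPDFReal 0 1 = stdPDF := by
  ext x
  simp [gaussianPDFReal, stdPDF]

lemma gaussianReal_zero_one_eq_withDensity :
    gaussianReal 0 1 = volume.withDensity fun u => ENNReal.ofReal (stdPDF u) := by
  rw [gaussianReal_of_var_ne_zero 0 one_ne_zero, gaussianPDF_def, gaussianPDFReal_zero_one]

lemma measureReal_gaussianReal_zero_one (s : Set ℝ) :
    (gaussianReal 0 1).real s = ∫ u in s, stdPDF u := by
  rw [measureReal_def, gaussianReal_apply_eq_integral 0 one_ne_zero, gaussianPDFReal_zero_one,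
    ENNReal.toReal_ofReal (setIntegral_nonneg_of_ae (ae_of_all _ fun u => (stdPDF_pos u).le))]

lemma map_volume_const_add_mul {a b : ℝ} (hb : 0 < b) :
    volume.map (fun e : ℝ => a + b * e) = ENNReal.ofReal b⁻¹ • volume := by
  rw [show (fun e : ℝ => a + b * e) = (a + ·) ∘ (b * ·) from rfl,
    ← Measure.map_map (by fun_prop) (by fun_prop), Real.map_volume_mul_left hb.ne',
    Measure.map_smul, map_add_left_eq_self, abs_of_pos (inv_pos.2 hb)]

lemma lintegral_comp_const_add_mul_mul_stdPDF_div {f : ℝ → ℝ≥0∞} (hf : Measurable f) (a : ℝ)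
    {b : ℝ} (hb : 0 < b) :
    ∫⁻ e, f (a + b * e) * ENNReal.ofReal (b * stdPDF (a + b * e) / stdPDF e) ∂gaussianReal 0 1
      = ∫⁻ u, f u ∂gaussianReal 0 1 := by
  set g : ℝ → ℝ≥0∞ := fun u => ENNReal.ofReal (stdPDF u) * f u
  have hg : Measurable g := by fun_prop
  have hpoint : ∀ e : ℝ, ENNReal.ofReal (stdPDF e) *
      (f (a + b * e) * ENNReal.ofReal (b * stdPDF (a + b * e) / stdPDF e))
        = ENNReal.ofReal b * g (a + b * e) := by
    intro e
    rw [mul_left_comm, ← ENNReal.ofReal_mul (stdPDF_pos e).le,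
      mul_div_cancel₀ _ (stdPDF_pos e).ne', ENNReal.ofReal_mul hb.le]
    ring
  rw [gaussianReal_zero_one_eq_withDensity,
    lintegral_withDensity_eq_lintegral_mul _ (by fun_prop) (by fun_prop),
    lintegral_withDensity_eq_lintegral_mul _ (by fun_prop) hf]
  calc ∫⁻ e, ENNReal.ofReal (stdPDF e) *
        (f (a + b * e) * ENNReal.ofReal (b * stdPDF (a + b * e) / stdPDF e))
      = ENNReal.ofReal b * ∫⁻ u, g u ∂volume.map (fun e => a + b * e) := by
        rw [lintegral_map hg (by fun_prop), ← lintegral_const_mul _ (by fun_prop)]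
        exact lintegral_congr hpoint
    _ = ∫⁻ u, g u := by
        rw [map_volume_const_add_mul hb, lintegral_smul_measure, smul_eq_mul, ← mul_assoc,
          ← ENNReal.ofReal_mul hb.le, mul_inv_cancel₀ hb.ne', ENNReal.ofReal_one, one_mul]

lemma lintegral_mul_comp_const_add_mul_mul_stdPDF_div {Ω : Type*} {m mΩ : MeasurableSpace Ω}
    {P : Measure Ω} [IsFiniteMeasure P] {g : Ω → ℝ≥0∞} {a b ε : Ω → ℝ}
    (hm : m ≤ mΩ) (hg : Measurable[m] g) (ha : Measurable[m] a) (hb : Measurable[m] b)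
    (hbpos : ∀ᵐ ω ∂P, 0 < b ω) (hε : Measurable ε) (hεlaw : P.map ε = gaussianReal 0 1)
    (hεindep : Indep (MeasurableSpace.comap ε inferInstance) m P)
    {f : ℝ → ℝ≥0∞} (hf : Measurable f) :
    ∫⁻ ω, g ω * (f (a ω + b ω * ε ω) *
        ENNReal.ofReal (b ω * stdPDF (a ω + b ω * ε ω) / stdPDF (ε ω))) ∂P
      = (∫⁻ ω, g ω ∂P) * ∫⁻ u, f u ∂gaussianReal 0 1 := by
  set V : Ω → ℝ≥0∞ × ℝ × ℝ := fun ω => (g ω, a ω, b ω)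
  set K : (ℝ≥0∞ × ℝ × ℝ) × ℝ → ℝ≥0∞ := fun q =>
    q.1.1 * (f (q.1.2.1 + q.1.2.2 * q.2) *
      ENNReal.ofReal (q.1.2.2 * stdPDF (q.1.2.1 + q.1.2.2 * q.2) / stdPDF q.2))
  have hVm : Measurable[m] V := hg.prodMk (ha.prodMk hb)
  have hV : Measurable V := hVm.mono hm le_rfl
  have hK : Measurable K := by fun_prop
  -- `(g, a, b)` is `m`-measurable, hence independent of `ε`: integrate `ε` out first.
  have hmap : P.map (fun ω => (V ω, ε ω)) = (P.map V).prod (gaussianReal 0 1) := by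
    rw [← hεlaw]
    exact (indepFun_iff_map_prod_eq_prod_map_map hV.aemeasurable hε.aemeasurable).1
      (indep_of_indep_of_le_left hεindep.symm hVm.comap_le)
  have hbpos' : ∀ᵐ v ∂P.map V, 0 < v.2.2 := by
    rw [ae_map_iff hV.aemeasurable (measurableSet_lt measurable_const (by fun_prop))]
    exact hbpos
  calc ∫⁻ ω, K (V ω, ε ω) ∂P
      = ∫⁻ v, ∫⁻ e, K (v, e) ∂gaussianReal 0 1 ∂P.map V := by
        rw [← lintegral_map hK (hV.prodMk hε), hmap, lintegral_prod _ hK.aemeasurable]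
    _ = ∫⁻ v, v.1 * ∫⁻ u, f u ∂gaussianReal 0 1 ∂P.map V := by
        refine lintegral_congr_ae (hbpos'.mono fun v hv => ?_)
        dsimp only [K]
        rw [lintegral_const_mul _ (by fun_prop),
          lintegral_comp_const_add_mul_mul_stdPDF_div hf _ hv]
    _ = (∫⁻ ω, g ω ∂P) * ∫⁻ u, f u ∂gaussianReal 0 1 := by
        rw [lintegral_mul_const _ measurable_fst, lintegral_map measurable_fst hV]

section IndepOfPast

variable {Ω β : Type*} {m mΩ : MeasurableSpace Ω} [MeasurableSpace β] {μ : Measure Ω}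

lemma map_eq_of_measure_inter_preimage_eq_mul [IsProbabilityMeasure μ]
    {Z : Ω → β} (hZ : Measurable Z) {ν : Measure β}
    (h : ∀ s B, MeasurableSet[m] s → MeasurableSet B → μ (s ∩ Z ⁻¹' B) = μ s * ν B) :
    μ.map Z = ν := by
  ext B hB
  simpa [Measure.map_apply hZ hB] using h Set.univ B MeasurableSet.univ hB

lemma indep_comap_of_measure_inter_preimage_eq_mul [IsProbabilityMeasure μ]
    {Z : Ω → β} (hZ : Measurable Z) {ν : Measure β}
    (h : ∀ s B, MeasurableSet[m] s → MeasurableSet B → μ (s ∩ Z ⁻¹' B) = μ s * ν B) :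
    Indep (MeasurableSpace.comap Z inferInstance) m μ := by
  rw [Indep_iff]
  rintro _ s ⟨B, hB, rfl⟩ hs
  rw [Set.inter_comm, h s B hs hB, ← Measure.map_apply hZ hB,
    map_eq_of_measure_inter_preimage_eq_mul hZ h, mul_comm]

lemma iIndepFun_of_indep_comap_of_measurable_lt [IsProbabilityMeasure μ]
    {𝒢 : ℕ → MeasurableSpace Ω} {Z : ℕ → Ω → β}
    (hZ : ∀ i t, i < t → Measurable[𝒢 t] (Z i))
    (hindep : ∀ t, Indep (MeasurableSpace.comap (Z t) inferInstance) (𝒢 t) μ) :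
    iIndepFun Z μ := by
  rw [iIndepFun_iff_measure_inter_preimage_eq_mul]
  intro S sets hsets
  induction S using Finset.induction_on_max with
  | empty => simp
  | insert t S hlt ih =>
    have hpast : MeasurableSet[𝒢 t] (⋂ i ∈ S, Z i ⁻¹' sets i) :=
      .biInter S.countable_toSet fun i hi =>
        hZ i t (hlt i hi) (hsets i (mem_insert_of_mem hi))
    rw [set_biInter_insert, prod_insert fun h => (hlt t h).false,
      (Indep_iff _ _ μ).1 (hindep t) _ _ ⟨_, hsets t (mem_insert_self t S), rfl⟩ hpast,
      ih fun i hi => hsets i (mem_insert_of_mem hi)]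

end IndepOfPast

lemma sum_mul_pos_of_eq_single {N : ℕ} {x c : Fin N → ℝ} (hc : ∀ i, 0 < c i)
    (hx : ∃ i, x = Pi.single i 1) : 0 < ∑ i, x i * c i := by
  obtain ⟨i, rfl⟩ := hx
  simpa [Pi.single_apply] using hc i

section sigG

variable {Ω : Type*} {N p : ℕ} (X : ℕ → Ω → Fin N → ℝ) (Y : ℤ → Ω → ℝ)

lemma measurable_Y_sigG {s : ℤ} {t : ℕ} (hs : s ≤ t) : Measurable[sigG X Y t] (Y s) :=
  (Measurable.of_comap_le (le_iSup (fun s : {s : ℤ // s ≤ t} =>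
    MeasurableSpace.comap (Y s.1) inferInstance) ⟨s, hs⟩)).mono le_sup_right le_rfl

lemma measurable_X_sigG {l t : ℕ} (hl : l ≤ t) : Measurable[sigG X Y t] (X l) :=
  (Measurable.of_comap_le (le_iSup (fun s : Fin (t + 1) =>
    MeasurableSpace.comap (X s.1) inferInstance) ⟨l, Nat.lt_succ_of_le hl⟩)).mono
    le_sup_left le_rfl

lemma sigG_mono : Monotone (sigG X Y) := fun t t' h =>
  sup_le (iSup_le fun s => (measurable_X_sigG X Y (by have := s.2; omega)).comap_le)
    (iSup_le fun s => (measurable_Y_sigG X Y (s.2.trans (by exact_mod_cast h))).comap_le)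

lemma sigG_le [MeasurableSpace Ω] (hXm : ∀ t, Measurable (X t)) (hYm : ∀ s, Measurable (Y s))
    (t : ℕ) : sigG X Y t ≤ ‹MeasurableSpace Ω› :=
  sup_le (iSup_le fun _ => (hXm _).comap_le) (iSup_le fun _ => (hYm _).comap_le)

end sigG

section Model

variable {Ω : Type*} {N p : ℕ} {X : ℕ → Ω → Fin N → ℝ} {Y : ℤ → Ω → ℝ} {ε : ℕ → Ω → ℝ}
  {F : Fin N → (Fin p → ℝ) → ℝ} {σv : Fin N → ℝ}

lemma measurable_past_sigG {l : ℤ} {t : ℕ} (hl : l ≤ t) : Measurable[sigG X Y t] (past Y p l) :=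
  @measurable_pi_lambda Ω (Fin p) (fun _ => ℝ) (sigG X Y t) _ _ fun _ =>
    measurable_Y_sigG X Y (by omega)

lemma measurable_eps_succ_sigG (hσ : ∀ i, 0 < σv i) (hF : ∀ i, Measurable (F i))
    (hXb : ∀ t ω, ∃ i, X t ω = Pi.single i 1)
    (hdyn : ∀ (t : ℕ) (ω : Ω), Y ((t : ℤ) + 1) ω =
      (∑ i, X t ω i * F i (past Y p ((t : ℤ)) ω)) + (∑ i, X t ω i * σv i) * ε (t + 1) ω)
    {l t : ℕ} (hl : l < t) : Measurable[sigG X Y t] (ε (l + 1)) := by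
  have hε : ε (l + 1) = fun ω => (Y ((l : ℤ) + 1) ω - ∑ i, X l ω i * F i (past Y p l ω)) /
      ∑ i, X l ω i * σv i := funext fun ω => by
    rw [hdyn l ω, eq_div_iff (sum_mul_pos_of_eq_single hσ (hXb l ω)).ne']
    ring
  have hY : Measurable[sigG X Y t] (Y ((l : ℤ) + 1)) := measurable_Y_sigG X Y (by omega)
  have hX : Measurable[sigG X Y t] (X l) := measurable_X_sigG X Y hl.le
  have hpast : Measurable[sigG X Y t] (past Y p l) := measurable_past_sigG (by omega)
  rw [hε]
  fun_prop

lemma Lam_succ (t : ℕ) (ω : Ω) : Lam X Y ε σv (t + 1) ω = Lam X Y ε σv t ω *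
    ((∑ i, X t ω i * σv i) * stdPDF (Y ((t : ℤ) + 1) ω) / stdPDF (ε (t + 1) ω)) := by
  simp only [Lam, prod_range_succ, mul_comm (σv _)]

lemma Lam_nonneg (hσ : ∀ i, 0 < σv i) (hXb : ∀ t ω, ∃ i, X t ω = Pi.single i 1)
    (t : ℕ) (ω : Ω) : 0 ≤ Lam X Y ε σv t ω :=
  prod_nonneg fun l _ => div_nonneg (mul_nonneg (by
    simpa only [mul_comm] using (sum_mul_pos_of_eq_single hσ (hXb l ω)).le)
      (stdPDF_pos _).le) (stdPDF_pos _).le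

lemma measurable_Lam_sigG (hσ : ∀ i, 0 < σv i) (hF : ∀ i, Measurable (F i))
    (hXb : ∀ t ω, ∃ i, X t ω = Pi.single i 1)
    (hdyn : ∀ (t : ℕ) (ω : Ω), Y ((t : ℤ) + 1) ω =
      (∑ i, X t ω i * F i (past Y p ((t : ℤ)) ω)) + (∑ i, X t ω i * σv i) * ε (t + 1) ω)
    (t : ℕ) : Measurable[sigG X Y t] (Lam X Y ε σv t) := by
  refine Finset.measurable_prod _ fun l hl => ?_
  have hl : l < t := mem_range.1 hl
  have hX : Measurable[sigG X Y t] (X l) := measurable_X_sigG X Y hl.le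
  have hY : Measurable[sigG X Y t] (Y ((l : ℤ) + 1)) := measurable_Y_sigG X Y (by omega)
  have hε : Measurable[sigG X Y t] (ε (l + 1)) := measurable_eps_succ_sigG hσ hF hXb hdyn hl
  fun_prop

end Model

lemma Pbar_inter_preimage_Y_succ {Ω : Type*} [MeasurableSpace Ω] {P Pbar : Measure Ω}
    [IsFiniteMeasure P] {N p : ℕ}
    {X : ℕ → Ω → Fin N → ℝ} {Y : ℤ → Ω → ℝ} {ε : ℕ → Ω → ℝ}
    {F : Fin N → (Fin p → ℝ) → ℝ} {σv : Fin N → ℝ}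
    (hXm : ∀ t, Measurable (X t)) (hYm : ∀ s, Measurable (Y s)) (hεm : ∀ t, Measurable (ε t))
    (hσ : ∀ i, 0 < σv i) (hF : ∀ i, Measurable (F i))
    (hXb : ∀ t ω, ∃ i, X t ω = Pi.single i 1)
    (hdyn : ∀ (t : ℕ) (ω : Ω), Y ((t : ℤ) + 1) ω =
      (∑ i, X t ω i * F i (past Y p ((t : ℤ)) ω)) + (∑ i, X t ω i * σv i) * ε (t + 1) ω)
    (hεlaw : ∀ t : ℕ, Measure.map (ε (t + 1)) P = gaussianReal 0 1)
    (hεindep : ∀ t : ℕ,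
      Indep (MeasurableSpace.comap (ε (t + 1)) inferInstance) (sigG X Y t) P)
    (hPbar : ∀ (t : ℕ) (s : Set Ω), MeasurableSet[sigG X Y t] s →
      Pbar s = ∫⁻ ω in s, ENNReal.ofReal (Lam X Y ε σv t ω) ∂P)
    (t : ℕ) {s : Set Ω} {B : Set ℝ} (hs : MeasurableSet[sigG X Y t] s) (hB : MeasurableSet B) :
    Pbar (s ∩ Y ((t : ℤ) + 1) ⁻¹' B) = Pbar s * gaussianReal 0 1 B := by
  set a : Ω → ℝ := fun ω => ∑ i, X t ω i * F i (past Y p t ω)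
  set b : Ω → ℝ := fun ω => ∑ i, X t ω i * σv i
  set L : Ω → ℝ≥0∞ := s.indicator fun ω => ENNReal.ofReal (Lam X Y ε σv t ω)
  have hm := sigG_le X Y hXm hYm
  have hX : Measurable[sigG X Y t] (X t) := measurable_X_sigG X Y le_rfl
  have hpast : Measurable[sigG X Y t] (past Y p t) := measurable_past_sigG le_rfl
  have hL : Measurable[sigG X Y t] L :=
    (measurable_Lam_sigG hσ hF hXb hdyn t).ennreal_ofReal.indicator hs
  have hset : MeasurableSet[sigG X Y (t + 1)] (s ∩ Y ((t : ℤ) + 1) ⁻¹' B) :=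
    (sigG_mono X Y t.le_succ s hs).inter (measurable_Y_sigG X Y (by omega) hB)
  have hdensity : ∀ ω, (s ∩ Y ((t : ℤ) + 1) ⁻¹' B).indicator
      (fun ω => ENNReal.ofReal (Lam X Y ε σv (t + 1) ω)) ω
        = L ω * (B.indicator 1 (a ω + b ω * ε (t + 1) ω) *
          ENNReal.ofReal (b ω * stdPDF (a ω + b ω * ε (t + 1) ω) / stdPDF (ε (t + 1) ω))) := by
    intro ω
    rw [← hdyn t ω]
    by_cases hωs : ω ∈ s <;> by_cases hωB : Y ((t : ℤ) + 1) ω ∈ B <;>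
      simp [L, b, hωs, hωB, Lam_succ, ENNReal.ofReal_mul (Lam_nonneg hσ hXb t ω)]
  rw [hPbar _ _ hset, ← lintegral_indicator (hm _ _ hset), lintegral_congr hdensity,
    lintegral_mul_comp_const_add_mul_mul_stdPDF_div (hm t) hL (by fun_prop) (by fun_prop)
      (ae_of_all _ fun ω => sum_mul_pos_of_eq_single hσ (hXb t ω)) (hεm _) (hεlaw t)
      (hεindep t) (measurable_one.indicator hB),
    lintegral_indicator (hm t _ hs), ← hPbar t s hs, lintegral_indicator_one hB]

theorem Y_iid_std_gaussian_under_Pbar_general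
    {Ω : Type*} [MeasurableSpace Ω] (P Pbar : Measure Ω)
    [IsProbabilityMeasure P] [IsProbabilityMeasure Pbar]
    {N p : ℕ}
    (X : ℕ → Ω → Fin N → ℝ) (Y : ℤ → Ω → ℝ) (ε : ℕ → Ω → ℝ)
    (F : Fin N → (Fin p → ℝ) → ℝ) (σv : Fin N → ℝ)
    -- measurability of the processes
    (hXm : ∀ t, Measurable (X t)) (hYm : ∀ s, Measurable (Y s)) (hεm : ∀ t, Measurable (ε t))
    -- the noise variances are positive
    (hσ : ∀ i, 0 < σv i)
    -- the regression functions are affine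
    (hFaff : ∀ i, ∃ (L : (Fin p → ℝ) →ₗ[ℝ] ℝ) (c : ℝ), ∀ v, F i v = L v + c)
    -- the hidden chain takes values in the standard basis vectors of ℝ^N
    (hXb : ∀ t ω, ∃ i, X t ω = Pi.single i 1)
    -- dynamics : Y_{t+1} = F_{X_t}(Y_{t−p+1},…,Y_t) + σ_{X_t} ε_{t+1}
    (hdyn : ∀ (t : ℕ) (ω : Ω), Y ((t : ℤ) + 1) ω =
      (∑ i, X t ω i * F i (past Y p ((t : ℤ)) ω)) + (∑ i, X t ω i * σv i) * ε (t + 1) ω)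
    -- the ε's are i.i.d. standard Gaussian, ε_{t+1} independent of 𝒢_t
    (hεlaw : ∀ t : ℕ, Measure.map (ε (t + 1)) P = gaussianReal 0 1)
    (hεindep : ∀ t : ℕ,
      Indep (MeasurableSpace.comap (ε (t + 1)) inferInstance) (sigG X Y t) P)
    -- P̄ is the measure whose Radon–Nikodym derivative restricted to 𝒢_t equals Λ_t
    (hPbar : ∀ (t : ℕ) (s : Set Ω), MeasurableSet[sigG X Y t] s →
      Pbar s = ∫⁻ ω in s, ENNReal.ofReal (Lam X Y ε σv t ω) ∂P)
 :
    (∀ l : ℕ, Measure.map (Y ((l : ℤ) + 1)) Pbar = gaussianReal 0 1) ∧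
    (iIndepFun (fun l : ℕ => Y ((l : ℤ) + 1)) Pbar) ∧
    (∀ (t : ℕ) (τ : ℝ),
      Pbar[Set.indicator {ω | Y ((t : ℤ) + 1) ω ≤ τ} (fun _ => (1 : ℝ)) | sigG X Y t]
        =ᵐ[Pbar] fun _ => ∫ u in Set.Iic τ, stdPDF u) := by
  have hF : ∀ i, Measurable (F i) := fun i => by
    obtain ⟨L, c, hL⟩ := hFaff i
    rw [funext hL]
    exact L.continuous_of_finiteDimensional.measurable.add_const c
  have hstep : ∀ t s B, MeasurableSet[sigG X Y t] s → MeasurableSet B →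
      Pbar (s ∩ Y ((t : ℤ) + 1) ⁻¹' B) = Pbar s * gaussianReal 0 1 B := fun t _ _ hs hB =>
    Pbar_inter_preimage_Y_succ hXm hYm hεm hσ hF hXb hdyn hεlaw hεindep hPbar t hs hB
  have hlaw : ∀ t : ℕ, Pbar.map (Y ((t : ℤ) + 1)) = gaussianReal 0 1 := fun t =>
    map_eq_of_measure_inter_preimage_eq_mul (hYm _) (hstep t)
  have hindep : ∀ t : ℕ,
      Indep (MeasurableSpace.comap (Y ((t : ℤ) + 1)) inferInstance) (sigG X Y t) Pbar :=
    fun t => indep_comap_of_measure_inter_preimage_eq_mul (hYm _) (hstep t)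
  refine ⟨hlaw, iIndepFun_of_indep_comap_of_measurable_lt
    (fun i t hit => measurable_Y_sigG X Y (by omega)) hindep, fun t τ => ?_⟩
  have hA : MeasurableSet[MeasurableSpace.comap (Y ((t : ℤ) + 1)) inferInstance]
      (Y ((t : ℤ) + 1) ⁻¹' Set.Iic τ) := ⟨Set.Iic τ, measurableSet_Iic, rfl⟩
  refine (condExp_indep_eq (hYm _).comap_le (sigG_le X Y hXm hYm t)
    (stronglyMeasurable_const.indicator hA) (hindep t)).trans (ae_of_all _ fun _ => ?_)
  change ∫ ω, (Y ((t : ℤ) + 1) ⁻¹' Set.Iic τ).indicator 1 ω ∂Pbar = _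
  rw [integral_indicator_one ((hYm _).comap_le _ hA),
    ← map_measureReal_apply (hYm _) measurableSet_Iic, hlaw t, measureReal_gaussianReal_zero_one]

/-- Under the probability measure `P̄` with `dP̄/dP|_{𝒢_t} = Λ_t`, the
random variables `Y_1, Y_2, …` are i.i.d. standard Gaussian `N(0,1)`; in particular, for every
`t ≥ 0` and `τ ∈ ℝ`, `P̄(Y_{t+1} ≤ τ | 𝒢_t) = ∫_{−∞}^τ φ(u) du` almost surely. -/
theorem Y_iid_std_gaussian_under_Pbar
    {Ω : Type*} [MeasurableSpace Ω] (P Pbar : Measure Ω)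
    [IsProbabilityMeasure P] [IsProbabilityMeasure Pbar]
    {N p : ℕ}
    (X : ℕ → Ω → Fin N → ℝ) (Y : ℤ → Ω → ℝ) (ε : ℕ → Ω → ℝ)
    (A : Matrix (Fin N) (Fin N) ℝ) (F : Fin N → (Fin p → ℝ) → ℝ) (σv : Fin N → ℝ)
    -- measurability of the processes
    (hXm : ∀ t, Measurable (X t)) (hYm : ∀ s, Measurable (Y s)) (hεm : ∀ t, Measurable (ε t))
    -- the noise variances are positive
    (hσ : ∀ i, 0 < σv i)
    -- the regression functions are affine
    (hFaff : ∀ i, ∃ (L : (Fin p → ℝ) →ₗ[ℝ] ℝ) (c : ℝ), ∀ v, F i v = L v + c)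
    -- the hidden chain takes values in the standard basis vectors of ℝ^N
    (hXb : ∀ t ω, ∃ i, X t ω = Pi.single i 1)
    -- (X_t) is a Markov chain with transition matrix A (a_{ij} = P(X_{t+1}=e_i | X_t=e_j))
    (hMarkov : ∀ t : ℕ,
      P[fun ω => X (t + 1) ω | sigG X Y t] =ᵐ[P] fun ω => A.mulVec (X t ω))
    -- dynamics : Y_{t+1} = F_{X_t}(Y_{t−p+1},…,Y_t) + σ_{X_t} ε_{t+1}
    (hdyn : ∀ (t : ℕ) (ω : Ω), Y ((t : ℤ) + 1) ω =
      (∑ i, X t ω i * F i (past Y p ((t : ℤ)) ω)) + (∑ i, X t ω i * σv i) * ε (t + 1) ω)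
    -- the ε's are i.i.d. standard Gaussian, ε_{t+1} independent of 𝒢_t
    (hεlaw : ∀ t : ℕ, Measure.map (ε (t + 1)) P = gaussianReal 0 1)
    (hεindep : ∀ t : ℕ,
      Indep (MeasurableSpace.comap (ε (t + 1)) inferInstance) (sigG X Y t) P)
    (hεiid : iIndepFun (fun t : ℕ => ε (t + 1)) P)
    -- P̄ is the measure whose Radon–Nikodym derivative restricted to 𝒢_t equals Λ_t
    (hPbar : ∀ (t : ℕ) (s : Set Ω), MeasurableSet[sigG X Y t] s →
      Pbar s = ∫⁻ ω in s, ENNReal.ofReal (Lam X Y ε σv t ω) ∂P)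
 :
    (∀ l : ℕ, Measure.map (Y ((l : ℤ) + 1)) Pbar = gaussianReal 0 1) ∧
    (iIndepFun (fun l : ℕ => Y ((l : ℤ) + 1)) Pbar) ∧
    (∀ (t : ℕ) (τ : ℝ),
      Pbar[Set.indicator {ω | Y ((t : ℤ) + 1) ω ≤ τ} (fun _ => (1 : ℝ)) | sigG X Y t]
        =ᵐ[Pbar] fun _ => ∫ u in Set.Iic τ, stdPDF u) :=
  Y_iid_std_gaussian_under_Pbar_general P Pbar X Y ε F σv hXm hYm hεm hσ hFaff hXb hdyn hεlaw
    hεindep hPbar
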